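/- arXiv:1709.02168 — 2 statements merged into one kernel-verified Lean document; each statement's English description precedes it below -/
import Mathlib

section
/- The variational quantities coincide with Wyner's common information: R_sh = R* = C_Wyner(X;Y), where R_sh := sup_{α∈(0,1]} (1/α) R^{(α)}. -/
open Filter

noncomputable section

/-- `P` is a probability mass function on the finite type `α`. -/
def IsPMF {α : Type*} [Fintype α] (P : α → ℝ) : Prop :=
  (∀ a, 0 ≤ P a) ∧ (∑ a, P a) = 1

/-- Rényi divergence of order `1 + s` (natural logarithm), `EReal`-valued.
For `s ≥ 0` it is `⊤` when `supp P ⊄ supp Q`; for `s = 0` it is the relative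
entropy; otherwise it is `(1/s) log ∑_{x ∈ supp P} P(x)^{1+s} Q(x)^{-s}`. -/
def renyiDiv {α : Type*} [Fintype α] (s : ℝ) (P Q : α → ℝ) : EReal :=
  if 0 ≤ s ∧ ∃ a, 0 < P a ∧ Q a = 0 then ⊤
  else if s = 0 then
    (((∑ a ∈ Finset.univ.filter (fun a => 0 < P a), P a * Real.log (P a / Q a)) : ℝ) : EReal)
  else
    ((((1 / s) * Real.log (∑ a ∈ Finset.univ.filter (fun a => 0 < P a),
        P a ^ (1 + s) * Q a ^ (-s))) : ℝ) : EReal)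

/-- Mutual information `I(XY; W)` of a joint distribution on `(X × Y) × W`. -/
def mutualInfoW {X Y W : Type*} [Fintype X] [Fintype Y] [Fintype W] (P : X × Y × W → ℝ) : ℝ :=
  ∑ z ∈ Finset.univ.filter (fun z : X × Y × W => 0 < P z),
    P z * Real.log (P z /
      ((∑ w, P (z.1, z.2.1, w)) * (∑ p : X × Y, P (p.1, p.2, z.2.2))))

/-- The Markov chain condition `X − W − Y`. -/
def IsMarkovXWY {X Y W : Type*} [Fintype X] [Fintype Y] [Fintype W] (P : X × Y × W → ℝ) : Prop :=
  ∀ x y w, P (x, y, w) * (∑ p : X × Y, P (p.1, p.2, w)) =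
    (∑ y', P (x, y', w)) * (∑ x', P (x', y, w))

/-- Wyner's common information of the target distribution `π` on `X × Y`. -/
def CWyner {X Y : Type*} [Fintype X] [Fintype Y] (π : X × Y → ℝ) : ℝ :=
  sInf { r | ∃ P : X × Y × Fin (Fintype.card X * Fintype.card Y) → ℝ,
    IsPMF P ∧ (∀ x y, (∑ w, P (x, y, w)) = π (x, y)) ∧ IsMarkovXWY P ∧ r = mutualInfoW P }

/-- The message set size `⌈e^{nR}⌉` of a rate-`R` synthesis code at blocklength `n`. -/
def numMsgs (R : ℝ) (n : ℕ) : ℕ := ⌈Real.exp (n * R)⌉₊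

/-- A synthesis code: a pair of conditional distributions from the message set to
`X^n` and `Y^n` respectively. -/
structure SynthCode (X Y : Type*) [Fintype X] [Fintype Y] (M n : ℕ) where
  PX : Fin M → (Fin n → X) → ℝ
  PY : Fin M → (Fin n → Y) → ℝ
  PX_pmf : ∀ m, IsPMF (PX m)
  PY_pmf : ∀ m, IsPMF (PY m)

/-- The distribution `P_{X^n Y^n}` induced by a synthesis code. -/
def SynthCode.induced {X Y : Type*} [Fintype X] [Fintype Y] {M n : ℕ}
    (c : SynthCode X Y M n) : (Fin n → X) × (Fin n → Y) → ℝ :=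
  fun z => (M : ℝ)⁻¹ * ∑ m, c.PX m z.1 * c.PY m z.2

/-- The `n`-fold product distribution `π^{⊗ n}` on `X^n × Y^n`. -/
def prodDist {X Y : Type*} [Fintype X] [Fintype Y] (π : X × Y → ℝ) (n : ℕ) :
    (Fin n → X) × (Fin n → Y) → ℝ :=
  fun z => ∏ i, π (z.1 i, z.2 i)

/-- Total variation distance between two distributions on a finite type. -/
def tvDist {α : Type*} [Fintype α] (P Q : α → ℝ) : ℝ :=
  (∑ a, |P a - Q a|) / 2

/-- Marginal `Q_U` of a distribution on `X × Y × U`. -/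
def margU {X Y U : Type*} [Fintype X] [Fintype Y] [Fintype U] (Q : X × Y × U → ℝ) (u : U) : ℝ :=
  ∑ p : X × Y, Q (p.1, p.2, u)

/-- Marginal `Q_{XU}` of a distribution on `X × Y × U`. -/
def margXU {X Y U : Type*} [Fintype X] [Fintype Y] [Fintype U] (Q : X × Y × U → ℝ)
    (x : X) (u : U) : ℝ := ∑ y, Q (x, y, u)

/-- Marginal `Q_{YU}` of a distribution on `X × Y × U`. -/
def margYU {X Y U : Type*} [Fintype X] [Fintype Y] [Fintype U] (Q : X × Y × U → ℝ)
    (y : Y) (u : U) : ℝ := ∑ x, Q (x, y, u)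

/-- Marginal `Q_{XY}` of a distribution on `X × Y × U`. -/
def margXY {X Y U : Type*} [Fintype X] [Fintype Y] [Fintype U] (Q : X × Y × U → ℝ)
    (x : X) (y : Y) : ℝ := ∑ u, Q (x, y, u)

/-- The set `𝒬` of distributions `Q_{XYU}` on `X × Y × U` (with `|U| = |X||Y|`)
whose `X × Y` marginal is supported inside `supp π`. -/
def QClass {X Y : Type*} [Fintype X] [Fintype Y] (π : X × Y → ℝ) :
    Set (X × Y × Fin (Fintype.card X * Fintype.card Y) → ℝ) :=
  { Q | IsPMF Q ∧ ∀ x y, 0 < margXY Q x y → 0 < π (x, y) }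

/-- The linear combination of likelihood ratios `ω^{(α)}_{Q_{XYU}}(x,y|u)`:
`ᾱ ( log (Q_{XY}/π) + log (Q_{XY|U}/(Q_{X|U}Q_{Y|U})) ) + α log (Q_{XY|U}/π)`. -/
def omegaFn {X Y U : Type*} [Fintype X] [Fintype Y] [Fintype U] (π : X × Y → ℝ) (α : ℝ)
    (Q : X × Y × U → ℝ) (z : X × Y × U) : ℝ :=
  (1 - α) * (Real.log (margXY Q z.1 z.2.1 / π (z.1, z.2.1)) +
      Real.log (Q z * margU Q z.2.2 / (margXU Q z.1 z.2.2 * margYU Q z.2.1 z.2.2))) +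
    α * Real.log (Q z / (margU Q z.2.2 * π (z.1, z.2.1)))

/-- The negative cumulant generating function `Ω^{(α,θ)}(Q_{XYU})`. -/
def OmegaQ {X Y U : Type*} [Fintype X] [Fintype Y] [Fintype U] (π : X × Y → ℝ) (α θ : ℝ)
    (Q : X × Y × U → ℝ) : ℝ :=
  -Real.log (∑ z ∈ Finset.univ.filter (fun z : X × Y × U => 0 < Q z),
    Q z * Real.exp (-(θ * omegaFn π α Q z)))

/-- The minimized negative cumulant generating function `Ω^{(α,θ)}`. -/
def OmegaMin {X Y : Type*} [Fintype X] [Fintype Y] (π : X × Y → ℝ) (α θ : ℝ) : ℝ :=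
  sInf { r | ∃ Q ∈ QClass π, r = OmegaQ π α θ Q }


/-- Relative entropy (KL divergence) between two distributions on a finite type. -/
def klDiv {α : Type*} [Fintype α] (P Q : α → ℝ) : ℝ :=
  ∑ a ∈ Finset.univ.filter (fun a => 0 < P a), P a * Real.log (P a / Q a)

/-- The conditional relative entropy `D(Q_{XY|U} ‖ Q_{X|U} Q_{Y|U} | Q_U)`. -/
def condKLind {X Y U : Type*} [Fintype X] [Fintype Y] [Fintype U] (Q : X × Y × U → ℝ) : ℝ :=
  ∑ z ∈ Finset.univ.filter (fun z : X × Y × U => 0 < Q z),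
    Q z * Real.log (Q z * margU Q z.2.2 / (margXU Q z.1 z.2.2 * margYU Q z.2.1 z.2.2))

/-- The conditional relative entropy `D(Q_{XY|U} ‖ π_{XY} | Q_U)`. -/
def condKLpi {X Y U : Type*} [Fintype X] [Fintype Y] [Fintype U] (π : X × Y → ℝ)
    (Q : X × Y × U → ℝ) : ℝ :=
  ∑ z ∈ Finset.univ.filter (fun z : X × Y × U => 0 < Q z),
    Q z * Real.log (Q z / (margU Q z.2.2 * π (z.1, z.2.1)))

/-- `R^{(α)}(Q_{XYU}) = ᾱ (D(Q_{XY}‖π) + D(Q_{XY|U}‖Q_{X|U}Q_{Y|U}|Q_U))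
       + α D(Q_{XY|U}‖π|Q_U)`. -/
def Ralpha {X Y U : Type*} [Fintype X] [Fintype Y] [Fintype U] (π : X × Y → ℝ) (α : ℝ)
    (Q : X × Y × U → ℝ) : ℝ :=
  (1 - α) * (klDiv (fun p : X × Y => margXY Q p.1 p.2) π + condKLind Q) + α * condKLpi π Q

/-- `R^{(α)} = min_{Q_{XYU} ∈ 𝒬} R^{(α)}(Q_{XYU})`. -/
def RalphaMin {X Y : Type*} [Fintype X] [Fintype Y] (π : X × Y → ℝ) (α : ℝ) : ℝ :=
  sInf { r | ∃ Q ∈ QClass π, r = Ralpha π α Q }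

/-- `R_sh := sup_{α ∈ (0,1]} (1/α) R^{(α)}`. -/
def Rsh {X Y : Type*} [Fintype X] [Fintype Y] (π : X × Y → ℝ) : ℝ :=
  sSup { r | ∃ α ∈ Set.Ioc (0 : ℝ) 1, r = (1 / α) * RalphaMin π α }

/-- Wyner's common information, minimizing over auxiliary alphabets of arbitrary
(finite) size. -/
def CWynerAll {X Y : Type*} [Fintype X] [Fintype Y] (π : X × Y → ℝ) : ℝ :=
  sInf { r | ∃ (k : ℕ) (P : X × Y × Fin k → ℝ),
    IsPMF P ∧ (∀ x y, (∑ w, P (x, y, w)) = π (x, y)) ∧ IsMarkovXWY P ∧ r = mutualInfoW P }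


/-!
Every `R^{(α)}(Q)` is a combination of three relative entropies, hence nonnegative, and on a
Wyner coupling `P` (with `P_{XY} = π` and `X − U − Y`) the first two vanish, so that
`R^{(α)}(P) = α I(XY;U)`; this gives `R_sh ≤ C_Wyner`.

Conversely, `𝒬` is compact and the three divergences are continuous on it (expanded into
`t log t` terms of marginals), so `R^{(α)}` has a minimizer `Q_α`, and
`ᾱ (D(Q_{XY}‖π) + I(X;Y|U)) + α D(Q_{XY|U}‖π|Q_U) ≤ α R_sh`. Letting `α → 0`, compactness
yields a `Q` with `D(Q_{XY}‖π) = I(X;Y|U) = 0` and `D(Q_{XY|U}‖π|Q_U) ≤ R_sh`: a Wyner coupling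
with `I(XY;U) ≤ R_sh`.

Finally, for a Wyner coupling `I(XY;U) = ∑_u P_U(u) D(P_{XY|U=u}‖π)` is linear in the weights
`P_U`, while the constraint `∑_u P_U(u) P_{XY|U=u} = π` lives in `ℝ^{X×Y}`; a Carathéodory
argument keeps at most `|X||Y|` atoms without increasing the objective, so restricting the
auxiliary alphabet to `|X||Y|` letters does not change `C_Wyner`.
-/
open Finset
open Real (log)
open InformationTheory (klFun klFun_nonneg klFun_eq_zero_iff)

section Gibbs

variable {α : Type*} [Fintype α] {f g : α → ℝ}

lemma mul_log_div_eq_sub_add_mul_klFun (a : ℝ) {b : ℝ} (hb : b ≠ 0) :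
    a * log (a / b) = a - b + b * klFun (a / b) := by
  rw [klFun]; field_simp; ring

lemma klDiv_eq_sum (hf : ∀ a, 0 ≤ f a) : klDiv f g = ∑ a, f a * log (f a / g a) :=
  sum_filter_of_ne fun a _ h => (hf a).lt_of_ne' (left_ne_zero_of_mul h)

lemma klDiv_eq_sum_mul_log_sub (hf : ∀ a, 0 ≤ f a) (hfg : ∀ a, 0 < f a → 0 < g a) :
    klDiv f g = ∑ a, (f a * log (f a) - f a * log (g a)) :=
  (klDiv_eq_sum hf).trans <| sum_congr rfl fun a _ => by
    rcases (hf a).eq_or_lt with h | h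
    · simp [← h]
    · rw [Real.log_div h.ne' (hfg a h).ne', mul_sub]

lemma klDiv_eq_one_sub_add_sum_klFun (hf : IsPMF f) (hfg : ∀ a, 0 < f a → 0 < g a) :
    klDiv f g = 1 - ∑ a ∈ univ.filter (0 < f ·), g a +
      ∑ a ∈ univ.filter (0 < f ·), g a * klFun (f a / g a) := by
  have hsupp : ∑ a ∈ univ.filter (0 < f ·), f a = 1 :=
    (sum_filter_of_ne fun a _ h => (hf.1 a).lt_of_ne' h).trans hf.2
  rw [klDiv, sum_congr rfl fun a ha =>
      mul_log_div_eq_sub_add_mul_klFun (f a) (hfg a (mem_filter.1 ha).2).ne',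
    sum_add_distrib, sum_sub_distrib, hsupp]

lemma mul_klFun_div_nonneg {a b : ℝ} (ha : 0 ≤ a) (hb : 0 ≤ b) : 0 ≤ b * klFun (a / b) :=
  mul_nonneg hb (klFun_nonneg (div_nonneg ha hb))

lemma klDiv_nonneg (hf : IsPMF f) (hg0 : ∀ a, 0 ≤ g a) (hg1 : ∑ a, g a ≤ 1)
    (hfg : ∀ a, 0 < f a → 0 < g a) : 0 ≤ klDiv f g := by
  have hS : ∑ a ∈ univ.filter (0 < f ·), g a ≤ 1 :=
    (sum_le_sum_of_subset_of_nonneg (filter_subset _ _) fun a _ _ => hg0 a).trans hg1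
  have hK := sum_nonneg fun a (_ : a ∈ univ.filter (0 < f ·)) =>
    mul_klFun_div_nonneg (hf.1 a) (hg0 a)
  rw [klDiv_eq_one_sub_add_sum_klFun hf hfg]
  linarith

lemma eq_of_klDiv_eq_zero (hf : IsPMF f) (hg0 : ∀ a, 0 ≤ g a) (hg1 : ∑ a, g a ≤ 1)
    (hfg : ∀ a, 0 < f a → 0 < g a) (h : klDiv f g = 0) : f = g := by
  classical
  set S := univ.filter (0 < f ·)
  have hS : ∑ a ∈ S, g a ≤ 1 :=
    (sum_le_sum_of_subset_of_nonneg (filter_subset _ _) fun a _ _ => hg0 a).trans hg1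
  have hK := sum_nonneg fun a (_ : a ∈ S) => mul_klFun_div_nonneg (hf.1 a) (hg0 a)
  rw [klDiv_eq_one_sub_add_sum_klFun hf hfg] at h
  have hK0 : ∀ a ∈ S, g a * klFun (f a / g a) = 0 :=
    (sum_eq_zero_iff_of_nonneg fun a _ => mul_klFun_div_nonneg (hf.1 a) (hg0 a)).1 (by linarith)
  have hSc : ∑ a ∈ Sᶜ, g a = 0 :=
    le_antisymm (by linarith [sum_add_sum_compl S g]) (sum_nonneg fun a _ => hg0 a)
  funext a
  by_cases ha : a ∈ S
  · have hfa : 0 < f a := (mem_filter.1 ha).2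
    have hga := hfg a hfa
    have := (mul_eq_zero.1 (hK0 a ha)).resolve_left hga.ne'
    rwa [klFun_eq_zero_iff (div_nonneg hfa.le hga.le), div_eq_one_iff_eq hga.ne'] at this
  · have hfa : f a = 0 := le_antisymm (by simpa [S] using ha) (hf.1 a)
    rw [hfa, (sum_eq_zero_iff_of_nonneg fun a _ => hg0 a).1 hSc a (mem_compl.2 ha)]

end Gibbs

section Marginals

variable {X Y U : Type*} [Fintype X] [Fintype Y] [Fintype U]

lemma sum_triple (F : X × Y × U → ℝ) : ∑ z, F z = ∑ x, ∑ y, ∑ u, F (x, y, u) := by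
  simp only [Fintype.sum_prod_type]

lemma sum_comm_three (F : X → Y → U → ℝ) :
    ∑ x, ∑ y, ∑ u, F x y u = ∑ u, ∑ x, ∑ y, F x y u :=
  (sum_congr rfl fun _ _ => sum_comm).trans sum_comm

lemma sum_mul_sum_triple (F : X × Y → ℝ) (G : U → ℝ) :
    ∑ z : X × Y × U, F (z.1, z.2.1) * G z.2.2 = (∑ p, F p) * ∑ u, G u := by
  rw [sum_triple, sum_mul_sum, Fintype.sum_prod_type]

lemma sum_mul_margU (Q : X × Y × U → ℝ) (h : U → ℝ) :
    ∑ z, Q z * h z.2.2 = ∑ u, margU Q u * h u := by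
  simp only [margU, Fintype.sum_prod_type, sum_mul]
  exact sum_comm_three _

lemma sum_mul_margXU (Q : X × Y × U → ℝ) (h : X → U → ℝ) :
    ∑ z, Q z * h z.1 z.2.2 = ∑ x, ∑ u, margXU Q x u * h x u := by
  simp only [sum_triple, margXU, sum_mul]
  exact sum_congr rfl fun _ _ => sum_comm

lemma sum_mul_margYU (Q : X × Y × U → ℝ) (h : Y → U → ℝ) :
    ∑ z, Q z * h z.2.1 z.2.2 = ∑ y, ∑ u, margYU Q y u * h y u := by
  simp only [sum_triple, margYU, sum_mul]
  exact sum_comm.trans (sum_congr rfl fun _ _ => sum_comm)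

lemma sum_margU (Q : X × Y × U → ℝ) : ∑ u, margU Q u = ∑ z, Q z := by
  simpa using (sum_mul_margU Q 1).symm

lemma sum_margXY (Q : X × Y × U → ℝ) : ∑ p : X × Y, margXY Q p.1 p.2 = ∑ z, Q z := by
  simp [margXY, Fintype.sum_prod_type]

lemma sum_margXU (Q : X × Y × U → ℝ) (u : U) : ∑ x, margXU Q x u = margU Q u := by
  simp [margXU, margU, Fintype.sum_prod_type]

lemma sum_margYU (Q : X × Y × U → ℝ) (u : U) : ∑ y, margYU Q y u = margU Q u := by
  simp [margYU, margU, Fintype.sum_prod_type]; exact sum_comm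

variable {Q : X × Y × U → ℝ}

lemma le_margU (hQ : ∀ z, 0 ≤ Q z) (x : X) (y : Y) (u : U) : Q (x, y, u) ≤ margU Q u :=
  single_le_sum (f := fun p : X × Y => Q (p.1, p.2, u)) (fun _ _ => hQ _) (mem_univ (x, y))

lemma le_margXU (hQ : ∀ z, 0 ≤ Q z) (x : X) (y : Y) (u : U) : Q (x, y, u) ≤ margXU Q x u :=
  single_le_sum (f := fun y' => Q (x, y', u)) (fun _ _ => hQ _) (mem_univ y)

lemma le_margYU (hQ : ∀ z, 0 ≤ Q z) (x : X) (y : Y) (u : U) : Q (x, y, u) ≤ margYU Q y u :=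
  single_le_sum (f := fun x' => Q (x', y, u)) (fun _ _ => hQ _) (mem_univ x)

lemma le_margXY (hQ : ∀ z, 0 ≤ Q z) (x : X) (y : Y) (u : U) : Q (x, y, u) ≤ margXY Q x y :=
  single_le_sum (f := fun u' => Q (x, y, u')) (fun _ _ => hQ _) (mem_univ u)

lemma margU_nonneg (hQ : ∀ z, 0 ≤ Q z) (u : U) : 0 ≤ margU Q u := sum_nonneg fun _ _ => hQ _

lemma margXU_nonneg (hQ : ∀ z, 0 ≤ Q z) (x : X) (u : U) : 0 ≤ margXU Q x u :=
  sum_nonneg fun _ _ => hQ _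

lemma margYU_nonneg (hQ : ∀ z, 0 ≤ Q z) (y : Y) (u : U) : 0 ≤ margYU Q y u :=
  sum_nonneg fun _ _ => hQ _

lemma margXY_nonneg (hQ : ∀ z, 0 ≤ Q z) (x : X) (y : Y) : 0 ≤ margXY Q x y :=
  sum_nonneg fun _ _ => hQ _

lemma margXU_le_margU (hQ : ∀ z, 0 ≤ Q z) (x : X) (u : U) : margXU Q x u ≤ margU Q u :=
  sum_margXU Q u ▸ single_le_sum (fun x' _ => margXU_nonneg hQ x' u) (mem_univ x)

lemma isPMF_margXY (hQ : IsPMF Q) : IsPMF fun p : X × Y => margXY Q p.1 p.2 :=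
  ⟨fun p => margXY_nonneg hQ.1 p.1 p.2, (sum_margXY Q).trans hQ.2⟩

end Marginals

section Divergences

variable {X Y U : Type*} [Fintype X] [Fintype Y] [Fintype U] {π : X × Y → ℝ}
  {Q : X × Y × U → ℝ}

/-- The Markov distribution `Q_U Q_{X|U} Q_{Y|U}`. -/
def condProd (Q : X × Y × U → ℝ) (z : X × Y × U) : ℝ :=
  margXU Q z.1 z.2.2 * margYU Q z.2.1 z.2.2 / margU Q z.2.2

lemma condKLind_eq_klDiv (Q : X × Y × U → ℝ) : condKLind Q = klDiv Q (condProd Q) :=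
  sum_congr rfl fun _ _ => by rw [condProd, div_div_eq_mul_div]

lemma condKLpi_eq_klDiv (π : X × Y → ℝ) (Q : X × Y × U → ℝ) :
    condKLpi π Q = klDiv Q fun z => margU Q z.2.2 * π (z.1, z.2.1) := rfl

lemma mutualInfoW_eq_klDiv (Q : X × Y × U → ℝ) :
    mutualInfoW Q = klDiv Q fun z => margXY Q z.1 z.2.1 * margU Q z.2.2 := rfl

lemma condProd_nonneg (hQ : ∀ z, 0 ≤ Q z) (z : X × Y × U) : 0 ≤ condProd Q z :=
  div_nonneg (mul_nonneg (margXU_nonneg hQ _ _) (margYU_nonneg hQ _ _)) (margU_nonneg hQ _)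

lemma condProd_pos (hQ : ∀ z, 0 ≤ Q z) {z : X × Y × U} (hz : 0 < Q z) : 0 < condProd Q z := by
  obtain ⟨x, y, u⟩ := z
  exact div_pos (mul_pos (hz.trans_le (le_margXU hQ x y u)) (hz.trans_le (le_margYU hQ x y u)))
    (hz.trans_le (le_margU hQ x y u))

lemma sum_condProd (hQ : IsPMF Q) : ∑ z, condProd Q z = 1 := by
  have hu : ∀ u, ∑ x, ∑ y, condProd Q (x, y, u) = margU Q u := fun u => by
    simp only [condProd, ← sum_div, ← sum_mul_sum, sum_margXU, sum_margYU, mul_self_div_self]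
  rw [sum_triple, sum_comm_three]
  simp only [hu, sum_margU, hQ.2]

lemma klDiv_margXY_nonneg (hπ : IsPMF π) {Q : X × Y × Fin (Fintype.card X * Fintype.card Y) → ℝ}
    (hQ : Q ∈ QClass π) : 0 ≤ klDiv (fun p : X × Y => margXY Q p.1 p.2) π :=
  klDiv_nonneg (isPMF_margXY hQ.1) hπ.1 hπ.2.le fun p hp => hQ.2 p.1 p.2 hp

lemma condKLind_nonneg (hQ : IsPMF Q) : 0 ≤ condKLind Q := by
  rw [condKLind_eq_klDiv]
  exact klDiv_nonneg hQ (condProd_nonneg hQ.1) (sum_condProd hQ).le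
    fun _ => condProd_pos hQ.1

lemma condKLpi_nonneg (hπ : IsPMF π) {Q : X × Y × Fin (Fintype.card X * Fintype.card Y) → ℝ}
    (hQ : Q ∈ QClass π) : 0 ≤ condKLpi π Q := by
  refine klDiv_nonneg hQ.1 (fun z => mul_nonneg (margU_nonneg hQ.1.1 _) (hπ.1 _)) ?_ ?_
  · simp_rw [mul_comm (margU Q _)]
    rw [sum_mul_sum_triple, hπ.2, sum_margU, hQ.1.2, one_mul]
  · rintro ⟨x, y, u⟩ hz
    exact mul_pos (hz.trans_le (le_margU hQ.1.1 x y u))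
      (hQ.2 x y (hz.trans_le (le_margXY hQ.1.1 x y u)))

lemma mutualInfoW_nonneg (hQ : IsPMF Q) : 0 ≤ mutualInfoW Q := by
  refine klDiv_nonneg hQ (fun z => mul_nonneg (margXY_nonneg hQ.1 _ _) (margU_nonneg hQ.1 _))
    ?_ ?_
  · exact ((sum_mul_sum_triple (fun p : X × Y => margXY Q p.1 p.2) (margU Q)).trans
      (by rw [sum_margXY, sum_margU, hQ.2, one_mul])).le
  · rintro ⟨x, y, u⟩ hz
    exact mul_pos (hz.trans_le (le_margXY hQ.1 x y u)) (hz.trans_le (le_margU hQ.1 x y u))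

lemma margXY_eq_of_klDiv_eq_zero (hπ : IsPMF π)
    {Q : X × Y × Fin (Fintype.card X * Fintype.card Y) → ℝ} (hQ : Q ∈ QClass π)
    (h : klDiv (fun p : X × Y => margXY Q p.1 p.2) π = 0) (x : X) (y : Y) :
    margXY Q x y = π (x, y) :=
  congrFun (eq_of_klDiv_eq_zero (isPMF_margXY hQ.1) hπ.1 hπ.2.le
    (fun p hp => hQ.2 p.1 p.2 hp) h) (x, y)

lemma isMarkovXWY_of_condKLind_eq_zero (hQ : IsPMF Q) (h : condKLind Q = 0) :
    IsMarkovXWY Q := by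
  rw [condKLind_eq_klDiv] at h
  have hQ_eq := eq_of_klDiv_eq_zero hQ (condProd_nonneg hQ.1) (sum_condProd hQ).le
    (fun _ => condProd_pos hQ.1) h
  intro x y u
  change Q (x, y, u) * margU Q u = margXU Q x u * margYU Q y u
  rcases eq_or_ne (margU Q u) 0 with hu | hu
  · have hx := le_antisymm (hu ▸ margXU_le_margU hQ.1 x u) (margXU_nonneg hQ.1 x u)
    rw [hu, hx, mul_zero, zero_mul]
  · rw [congrFun hQ_eq (x, y, u), condProd, div_mul_cancel₀ _ hu]

end Divergences

section Couplings

variable {X Y U : Type*} [Fintype X] [Fintype Y] [Fintype U] {π : X × Y → ℝ}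
  {P : X × Y × U → ℝ}

def IsWynerCoupling (π : X × Y → ℝ) (P : X × Y × U → ℝ) : Prop :=
  IsPMF P ∧ (∀ x y, ∑ u, P (x, y, u) = π (x, y)) ∧ IsMarkovXWY P

lemma IsWynerCoupling.mem_QClass
    {P : X × Y × Fin (Fintype.card X * Fintype.card Y) → ℝ} (hP : IsWynerCoupling π P) :
    P ∈ QClass π :=
  ⟨hP.1, fun x y h => hP.2.1 x y ▸ h⟩

lemma klDiv_self {α : Type*} [Fintype α] (f : α → ℝ) : klDiv f f = 0 :=
  sum_eq_zero fun a ha => by rw [div_self (mem_filter.1 ha).2.ne', Real.log_one, mul_zero]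

lemma IsMarkovXWY.mul_margU (hP : IsMarkovXWY P) (x : X) (y : Y) (u : U) :
    P (x, y, u) * margU P u = margXU P x u * margYU P y u :=
  hP x y u

lemma condKLind_eq_zero (hP : IsMarkovXWY P) : condKLind P = 0 :=
  sum_eq_zero fun ⟨x, y, u⟩ _ => by
    change P (x, y, u) * log (P (x, y, u) * margU P u / (margXU P x u * margYU P y u)) = 0
    rw [hP.mul_margU]
    rcases eq_or_ne (margXU P x u * margYU P y u) 0 with h | h <;> simp [h]

lemma condKLpi_eq_mutualInfoW (hm : ∀ x y, ∑ u, P (x, y, u) = π (x, y)) :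
    condKLpi π P = mutualInfoW P :=
  sum_congr rfl fun z _ => by rw [mul_comm (margU P _), ← hm]; rfl

lemma Ralpha_eq_mul_mutualInfoW (hP : IsWynerCoupling π P) (α : ℝ) :
    Ralpha π α P = α * mutualInfoW P := by
  have hm : (fun p : X × Y => margXY P p.1 p.2) = π := funext fun p => hP.2.1 p.1 p.2
  rw [Ralpha, hm, klDiv_self, condKLind_eq_zero hP.2.2, condKLpi_eq_mutualInfoW hP.2.1]
  ring

end Couplings

section Mixtures

def mixture {X Y U : Type*} (w : U → ℝ) (c : U → X × Y → ℝ) : X × Y × U → ℝ :=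
  fun z => w z.2.2 * c z.2.2 (z.1, z.2.1)

lemma mixture_nonneg {X Y U : Type*} [Fintype X] [Fintype Y] {w : U → ℝ} {c : U → X × Y → ℝ}
    (hw : ∀ u, 0 ≤ w u) (hc : ∀ u, w u ≠ 0 → IsPMF (c u)) (z : X × Y × U) :
    0 ≤ mixture w c z := by
  rcases eq_or_ne (w z.2.2) 0 with h | h
  · simp [mixture, h]
  · exact mul_nonneg (hw _) ((hc _ h).1 _)

variable {X Y U : Type*} [Fintype X] [Fintype Y] [Fintype U] {π : X × Y → ℝ}
  {w : U → ℝ} {c : U → X × Y → ℝ}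

/-- For a probability mass function `c`, this says `c = c_X ⊗ c_Y`. -/
def IsIndep (c : X × Y → ℝ) : Prop :=
  ∀ x y, c (x, y) = (∑ y', c (x, y')) * ∑ x', c (x', y)

lemma margU_mixture (w : U → ℝ) (c : U → X × Y → ℝ) (u : U) :
    margU (mixture w c) u = w u * ∑ p, c u p := by
  simp [margU, mixture, mul_sum]

lemma isWynerCoupling_mixture (hπ : IsPMF π) (hw : ∀ u, 0 ≤ w u)
    (hc : ∀ u, w u ≠ 0 → IsPMF (c u) ∧ IsIndep (c u))
    (hm : ∀ p, ∑ u, w u * c u p = π p) : IsWynerCoupling π (mixture w c) := by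
  have hmarg : ∀ x y, ∑ u, mixture w c (x, y, u) = π (x, y) := fun x y => hm (x, y)
  refine ⟨⟨mixture_nonneg hw fun u h => (hc u h).1, ?_⟩, hmarg, fun x y u => ?_⟩
  · simp_rw [sum_triple, hmarg, ← Fintype.sum_prod_type]
    exact hπ.2
  · change mixture w c (x, y, u) * margU _ u = margXU _ x u * margYU _ y u
    rcases eq_or_ne (w u) 0 with h | h
    · simp [mixture, margXU, h]
    · obtain ⟨hcu, hind⟩ := hc u h
      rw [margU_mixture, hcu.2]
      simp only [mixture, margXU, margYU, ← mul_sum]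
      rw [hind x y]
      ring

lemma mutualInfoW_mixture (hw : ∀ u, 0 ≤ w u) (hc : ∀ u, w u ≠ 0 → IsPMF (c u))
    (hm : ∀ p, ∑ u, w u * c u p = π p) :
    mutualInfoW (mixture w c) = ∑ u, w u * klDiv (c u) π := by
  rw [mutualInfoW_eq_klDiv, klDiv_eq_sum (mixture_nonneg hw hc), sum_triple, sum_comm_three]
  refine sum_congr rfl fun u _ => ?_
  rcases eq_or_ne (w u) 0 with h | h
  · simp [mixture, h]
  · rw [klDiv_eq_sum (hc u h).1, mul_sum, Fintype.sum_prod_type]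
    refine sum_congr rfl fun x _ => sum_congr rfl fun y _ => ?_
    have hxy : margXY (mixture w c) x y = π (x, y) := hm (x, y)
    rw [margU_mixture, (hc u h).2, mul_one, hxy, mixture, mul_comm (π _), mul_div_mul_left _ _ h,
      mul_assoc]

lemma exists_isWynerCoupling (hπ : IsPMF π) :
    ∃ P : X × Y × Fin (Fintype.card X * Fintype.card Y) → ℝ, IsWynerCoupling π P := by
  classical
  let e : Fin (Fintype.card X * Fintype.card Y) ≃ X × Y :=
    (finCongr (Fintype.card_prod X Y).symm).trans (Fintype.equivFin _).symm
  refine ⟨mixture (fun j => π (e j)) (fun j p => if p = e j then 1 else 0),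
    isWynerCoupling_mixture hπ (fun j => hπ.1 _) (fun j _ => ⟨⟨fun p => ?_, ?_⟩, ?_⟩) fun p => ?_⟩
  · dsimp only; split_ifs <;> norm_num
  · simp
  · intro x y
    obtain ⟨a, b⟩ := e j
    by_cases hx : x = a <;> by_cases hy : y = b <;> simp [hx, hy]
  · simpa using e.sum_comp fun q => π q * if p = q then 1 else 0

end Mixtures

section Bounds

variable {X Y : Type*} [Fintype X] [Fintype Y] {π : X × Y → ℝ}

lemma CWyner_le_mutualInfoW {P : X × Y × Fin (Fintype.card X * Fintype.card Y) → ℝ}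
    (hP : IsWynerCoupling π P) : CWyner π ≤ mutualInfoW P :=
  csInf_le ⟨0, by rintro _ ⟨Q, hQ, -, -, rfl⟩; exact mutualInfoW_nonneg hQ⟩
    ⟨P, hP.1, hP.2.1, hP.2.2, rfl⟩

lemma le_CWyner (hπ : IsPMF π) {r : ℝ}
    (h : ∀ P : X × Y × Fin (Fintype.card X * Fintype.card Y) → ℝ,
      IsWynerCoupling π P → r ≤ mutualInfoW P) : r ≤ CWyner π := by
  obtain ⟨P, hP⟩ := exists_isWynerCoupling hπ
  exact le_csInf ⟨_, P, hP.1, hP.2.1, hP.2.2, rfl⟩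
    fun _ ⟨Q, hQ, hm, hMk, hr⟩ => hr ▸ h Q ⟨hQ, hm, hMk⟩

lemma CWynerAll_le_mutualInfoW {k : ℕ} {P : X × Y × Fin k → ℝ} (hP : IsWynerCoupling π P) :
    CWynerAll π ≤ mutualInfoW P :=
  csInf_le ⟨0, by rintro _ ⟨k, Q, hQ, -, -, rfl⟩; exact mutualInfoW_nonneg hQ⟩
    ⟨k, P, hP.1, hP.2.1, hP.2.2, rfl⟩

lemma le_CWynerAll (hπ : IsPMF π) {r : ℝ}
    (h : ∀ (k : ℕ) (P : X × Y × Fin k → ℝ), IsWynerCoupling π P → r ≤ mutualInfoW P) :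
    r ≤ CWynerAll π := by
  obtain ⟨P, hP⟩ := exists_isWynerCoupling hπ
  exact le_csInf ⟨_, _, P, hP.1, hP.2.1, hP.2.2, rfl⟩
    fun _ ⟨k, Q, hQ, hm, hMk, hr⟩ => hr ▸ h k Q ⟨hQ, hm, hMk⟩

lemma CWynerAll_le_CWyner (hπ : IsPMF π) : CWynerAll π ≤ CWyner π :=
  le_CWyner hπ fun _ hP => CWynerAll_le_mutualInfoW hP

lemma Ralpha_nonneg (hπ : IsPMF π) {α : ℝ} (hα0 : 0 ≤ α) (hα1 : α ≤ 1)
    {Q : X × Y × Fin (Fintype.card X * Fintype.card Y) → ℝ} (hQ : Q ∈ QClass π) :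
    0 ≤ Ralpha π α Q := by
  have hD1 := klDiv_margXY_nonneg hπ hQ
  have hD2 := condKLind_nonneg hQ.1
  have hD3 := condKLpi_nonneg hπ hQ
  have h1α : 0 ≤ 1 - α := sub_nonneg.2 hα1
  unfold Ralpha
  positivity

lemma RalphaMin_le (hπ : IsPMF π) {α : ℝ} (hα0 : 0 ≤ α) (hα1 : α ≤ 1)
    {Q : X × Y × Fin (Fintype.card X * Fintype.card Y) → ℝ} (hQ : Q ∈ QClass π) :
    RalphaMin π α ≤ Ralpha π α Q :=
  csInf_le ⟨0, by rintro _ ⟨Q, hQ, rfl⟩; exact Ralpha_nonneg hπ hα0 hα1 hQ⟩ ⟨Q, hQ, rfl⟩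

lemma one_div_mul_RalphaMin_le_CWyner (hπ : IsPMF π) {α : ℝ} (hα : α ∈ Set.Ioc 0 1) :
    1 / α * RalphaMin π α ≤ CWyner π :=
  le_CWyner hπ fun P hP => by
    rw [one_div, inv_mul_le_iff₀ hα.1, ← Ralpha_eq_mul_mutualInfoW hP]
    exact RalphaMin_le hπ hα.1.le hα.2 hP.mem_QClass

lemma Rsh_le_CWyner (hπ : IsPMF π) : Rsh π ≤ CWyner π :=
  csSup_le ⟨_, 1, ⟨one_pos, le_rfl⟩, rfl⟩
    fun _ ⟨_, hα, hr⟩ => hr ▸ one_div_mul_RalphaMin_le_CWyner hπ hα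

lemma RalphaMin_le_mul_Rsh (hπ : IsPMF π) {α : ℝ} (hα : α ∈ Set.Ioc 0 1) :
    RalphaMin π α ≤ α * Rsh π := by
  have h : 1 / α * RalphaMin π α ≤ Rsh π :=
    le_csSup ⟨CWyner π, fun _ ⟨_, hβ, hr⟩ => hr ▸ one_div_mul_RalphaMin_le_CWyner hπ hβ⟩
      ⟨α, hα, rfl⟩
  rwa [one_div, inv_mul_le_iff₀ hα.1] at h

end Bounds

lemma IsCompact.exists_nonpos_of_forall_exists_le {E : Type*} [TopologicalSpace E] {K : Set E}
    (hK : IsCompact K) {f : E → ℝ} (hf : ContinuousOn f K) (h : ∀ ε > 0, ∃ x ∈ K, f x ≤ ε) :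
    ∃ x ∈ K, f x ≤ 0 := by
  obtain ⟨x₁, hx₁, -⟩ := h 1 one_pos
  obtain ⟨x, hx, hmin⟩ := hK.exists_isMinOn ⟨x₁, hx₁⟩ hf
  refine ⟨x, hx, le_of_forall_pos_le_add fun ε hε => ?_⟩
  obtain ⟨y, hy, hfy⟩ := h ε hε
  simpa using (hmin hy).trans hfy

section Continuity

variable {X Y U : Type*} [Fintype X] [Fintype Y] [Fintype U] {π : X × Y → ℝ}
  {Q : X × Y × U → ℝ}

@[fun_prop]
lemma continuous_margU (u : U) : Continuous fun Q : X × Y × U → ℝ => margU Q u := by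
  unfold margU; fun_prop

@[fun_prop]
lemma continuous_margXU (x : X) (u : U) : Continuous fun Q : X × Y × U → ℝ => margXU Q x u := by
  unfold margXU; fun_prop

@[fun_prop]
lemma continuous_margYU (y : Y) (u : U) : Continuous fun Q : X × Y × U → ℝ => margYU Q y u := by
  unfold margYU; fun_prop

@[fun_prop]
lemma continuous_margXY (x : X) (y : Y) : Continuous fun Q : X × Y × U → ℝ => margXY Q x y := by
  unfold margXY; fun_prop

lemma condKLpi_eq_sum_mul_log (hQ : ∀ z, 0 ≤ Q z) (hπQ : ∀ z, 0 < Q z → 0 < π (z.1, z.2.1)) :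
    condKLpi π Q = ∑ z, Q z * log (Q z) - ∑ u, margU Q u * log (margU Q u) -
      ∑ z, Q z * log (π (z.1, z.2.1)) := by
  have hsplit : ∀ z, Q z * log (margU Q z.2.2 * π (z.1, z.2.1)) =
      Q z * log (margU Q z.2.2) + Q z * log (π (z.1, z.2.1)) := by
    rintro ⟨x, y, u⟩
    rcases (hQ (x, y, u)).eq_or_lt with h | h
    · simp [← h]
    · rw [Real.log_mul (h.trans_le (le_margU hQ x y u)).ne' (hπQ _ h).ne', mul_add]
  rw [condKLpi_eq_klDiv, klDiv_eq_sum_mul_log_sub hQ fun ⟨x, y, u⟩ h =>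
      mul_pos (h.trans_le (le_margU hQ x y u)) (hπQ _ h), ← sum_mul_margU Q fun u => log (margU Q u),
    ← sum_sub_distrib, ← sum_sub_distrib]
  exact sum_congr rfl fun z _ => by rw [hsplit]; ring

lemma condKLind_eq_sum_mul_log (hQ : ∀ z, 0 ≤ Q z) :
    condKLind Q = ∑ z, Q z * log (Q z) + ∑ u, margU Q u * log (margU Q u) -
      ∑ x, ∑ u, margXU Q x u * log (margXU Q x u) -
      ∑ y, ∑ u, margYU Q y u * log (margYU Q y u) := by
  have hsplit : ∀ z, Q z * log (condProd Q z) = Q z * log (margXU Q z.1 z.2.2) +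
      Q z * log (margYU Q z.2.1 z.2.2) - Q z * log (margU Q z.2.2) := by
    rintro ⟨x, y, u⟩
    rcases (hQ (x, y, u)).eq_or_lt with h | h
    · simp [← h]
    · rw [condProd, Real.log_div (mul_pos (h.trans_le (le_margXU hQ x y u))
          (h.trans_le (le_margYU hQ x y u))).ne' (h.trans_le (le_margU hQ x y u)).ne',
        Real.log_mul (h.trans_le (le_margXU hQ x y u)).ne' (h.trans_le (le_margYU hQ x y u)).ne']
      ring
  rw [condKLind_eq_klDiv, klDiv_eq_sum_mul_log_sub hQ fun _ => condProd_pos hQ,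
    ← sum_mul_margU Q fun u => log (margU Q u),
    ← sum_mul_margXU Q fun x u => log (margXU Q x u),
    ← sum_mul_margYU Q fun y u => log (margYU Q y u),
    ← sum_add_distrib, ← sum_sub_distrib, ← sum_sub_distrib]
  exact sum_congr rfl fun z _ => by rw [hsplit]; ring

end Continuity

section Compactness

variable {X Y : Type*} [Fintype X] [Fintype Y] {π : X × Y → ℝ}

lemma isCompact_QClass (π : X × Y → ℝ) : IsCompact (QClass π) := by
  have : QClass π = stdSimplex ℝ _ ∩ ⋂ p : X × Y, {Q | 0 < margXY Q p.1 p.2 → 0 < π p} := by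
    ext Q; simp [QClass, IsPMF, stdSimplex]
  rw [this]
  refine (isCompact_stdSimplex ℝ _).inter_right (isClosed_iInter fun p => ?_)
  by_cases hp : 0 < π p
  · simp [hp]
  · simpa [hp] using isClosed_le (continuous_margXY p.1 p.2) continuous_const

lemma continuousOn_klDiv_margXY (π : X × Y → ℝ) :
    ContinuousOn (fun Q => klDiv (fun p : X × Y => margXY Q p.1 p.2) π) (QClass π) := by
  refine ContinuousOn.congr (f := fun Q => ∑ p : X × Y,
    (margXY Q p.1 p.2 * log (margXY Q p.1 p.2) - margXY Q p.1 p.2 * log (π p))) (by fun_prop)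
    fun Q hQ => klDiv_eq_sum_mul_log_sub (fun p => margXY_nonneg hQ.1.1 p.1 p.2)
      fun p hp => hQ.2 p.1 p.2 hp

lemma continuousOn_condKLind (π : X × Y → ℝ) :
    ContinuousOn (fun Q => condKLind Q) (QClass π) :=
  ContinuousOn.congr (by fun_prop) fun Q hQ => condKLind_eq_sum_mul_log hQ.1.1

lemma continuousOn_condKLpi (π : X × Y → ℝ) :
    ContinuousOn (fun Q => condKLpi π Q) (QClass π) :=
  ContinuousOn.congr (by fun_prop) fun Q hQ => condKLpi_eq_sum_mul_log hQ.1.1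
    fun ⟨x, y, u⟩ hz => hQ.2 x y (hz.trans_le (le_margXY hQ.1.1 x y u))

end Compactness

section Limit

variable {X Y : Type*} [Fintype X] [Fintype Y] {π : X × Y → ℝ}

lemma exists_Ralpha_le_RalphaMin (hπ : IsPMF π) (α : ℝ) :
    ∃ Q ∈ QClass π, Ralpha π α Q ≤ RalphaMin π α := by
  obtain ⟨P, hP⟩ := exists_isWynerCoupling hπ
  have hcont : ContinuousOn (Ralpha π α) (QClass π) :=
    ((continuousOn_const.mul ((continuousOn_klDiv_margXY π).add (continuousOn_condKLind π))).add
      (continuousOn_const.mul (continuousOn_condKLpi π)))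
  obtain ⟨Q, hQ, hmin⟩ := (isCompact_QClass π).exists_isMinOn ⟨P, hP.mem_QClass⟩ hcont
  exact ⟨Q, hQ, le_csInf ⟨_, P, hP.mem_QClass, rfl⟩ fun _ ⟨Q', hQ', hr⟩ => hr ▸ hmin hQ'⟩

lemma Rsh_nonneg (hπ : IsPMF π) : 0 ≤ Rsh π := by
  obtain ⟨Q, hQ, hle⟩ := exists_Ralpha_le_RalphaMin hπ 1
  have hR := RalphaMin_le_mul_Rsh hπ (α := 1) ⟨one_pos, le_rfl⟩
  linarith [Ralpha_nonneg hπ zero_le_one le_rfl hQ]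

/-- Minimizing `R^{(α)}` with `α = ε / (R_sh + ε + 1)`. -/
lemma exists_divergences_le (hπ : IsPMF π) {ε : ℝ} (hε : 0 < ε) :
    ∃ Q ∈ QClass π, klDiv (fun p : X × Y => margXY Q p.1 p.2) π + condKLind Q ≤ ε ∧
      condKLpi π Q ≤ Rsh π := by
  set s := Rsh π
  have hs := Rsh_nonneg hπ
  set α := ε / (s + ε + 1)
  have hα : α ∈ Set.Ioc 0 1 := ⟨by positivity, (div_le_one (by positivity)).2 (by linarith)⟩
  have hαs : α * (s + ε + 1) = ε := div_mul_cancel₀ _ (by positivity)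
  obtain ⟨Q, hQ, hle⟩ := exists_Ralpha_le_RalphaMin hπ α
  refine ⟨Q, hQ, ?_⟩
  set A := klDiv (fun p : X × Y => margXY Q p.1 p.2) π + condKLind Q
  have hA : 0 ≤ A := add_nonneg (klDiv_margXY_nonneg hπ hQ) (condKLind_nonneg hQ.1)
  have hB := condKLpi_nonneg hπ hQ
  have hR : (1 - α) * A + α * condKLpi π Q ≤ α * s := hle.trans (RalphaMin_le_mul_Rsh hπ hα)
  have h1α : 0 ≤ 1 - α := sub_nonneg.2 hα.2
  constructor
  · have hA' : (1 - α) * A ≤ α * s := by linarith [mul_nonneg hα.1.le hB]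
    refine le_of_mul_le_mul_left (a := s + 1) ?_ (by linarith)
    calc (s + 1) * A = (1 - α) * A * (s + ε + 1) := by
          rw [mul_right_comm, sub_mul, one_mul, hαs]; ring
      _ ≤ α * s * (s + ε + 1) := by gcongr
      _ = ε * s := by rw [mul_right_comm, hαs]
      _ ≤ (s + 1) * ε := by nlinarith
  · exact le_of_mul_le_mul_left (by linarith [mul_nonneg h1α hA]) hα.1

lemma exists_isWynerCoupling_mutualInfoW_le_Rsh (hπ : IsPMF π) :
    ∃ P : X × Y × Fin (Fintype.card X * Fintype.card Y) → ℝ,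
      IsWynerCoupling π P ∧ mutualInfoW P ≤ Rsh π := by
  obtain ⟨Q, hQ, hle⟩ := (isCompact_QClass π).exists_nonpos_of_forall_exists_le
    (f := fun Q => max (klDiv (fun p : X × Y => margXY Q p.1 p.2) π + condKLind Q)
      (condKLpi π Q - Rsh π))
    (((continuousOn_klDiv_margXY π).add (continuousOn_condKLind π)).sup
      ((continuousOn_condKLpi π).sub continuousOn_const))
    fun ε hε => let ⟨Q, hQ, h₁, h₂⟩ := exists_divergences_le hπ hε
      ⟨Q, hQ, max_le h₁ (by linarith)⟩
  obtain ⟨h₁, h₂⟩ := max_le_iff.1 hle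
  have hD1 := klDiv_margXY_nonneg hπ hQ
  have hD2 := condKLind_nonneg hQ.1
  have hm := margXY_eq_of_klDiv_eq_zero hπ hQ (by linarith)
  refine ⟨Q, ⟨hQ.1, hm, isMarkovXWY_of_condKLind_eq_zero hQ.1 (by linarith)⟩, ?_⟩
  rw [← condKLpi_eq_mutualInfoW hm]
  linarith

lemma CWyner_le_Rsh (hπ : IsPMF π) : CWyner π ≤ Rsh π :=
  let ⟨_, hP, hle⟩ := exists_isWynerCoupling_mutualInfoW_le_Rsh hπ
  (CWyner_le_mutualInfoW hP).trans hle

end Limit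

section SparseReweighting

variable {ι V : Type*} [Fintype ι] [AddCommGroup V] [Module ℝ V]

lemma exists_neg_of_sum_eq_zero {d : ι → ℝ} (hd : d ≠ 0) (hsum : ∑ i, d i = 0) :
    ∃ i, d i < 0 := by
  by_contra! h
  exact hd (funext fun i => (sum_eq_zero_iff_of_nonneg fun i _ => h i).1 hsum i (mem_univ i))

/-- Take a linear relation among the `v i` with `w i ≠ 0`. As `ℓ (v i) = 1` there, its
coefficients sum to zero, so it and its negative both have a negative entry; keep the one that
does not increase `∑ d i * φ i`. -/
lemma exists_descent_direction [FiniteDimensional ℝ V] (ℓ : V →ₗ[ℝ] ℝ) {v : ι → V}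
    (φ : ι → ℝ) {w : ι → ℝ} (hv : ∀ i, w i ≠ 0 → ℓ (v i) = 1)
    (hcard : Module.finrank ℝ V < #{i | w i ≠ 0}) :
    ∃ d : ι → ℝ, (∀ i, d i ≠ 0 → w i ≠ 0) ∧ ∑ i, d i • v i = 0 ∧ ∑ i, d i * φ i ≤ 0 ∧
      ∃ i, d i < 0 := by
  classical
  obtain ⟨g, hg, i₀, hi₀S, hi₀⟩ := not_linearIndepOn_finset_iff (v := v).1 fun hli =>
    hcard.not_ge (by simpa using hli.fintype_card_le_finrank)
  set d : ι → ℝ := fun i => if w i ≠ 0 then g i else 0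
  have hdw : ∀ i, d i ≠ 0 → w i ≠ 0 := fun i hi => by by_contra h; simp [d, h] at hi
  have hdv : ∑ i, d i • v i = 0 := by
    rw [← hg]; simp [d, ite_smul, sum_ite]
  have hd0 : d ≠ 0 := fun h => hi₀ (by simpa [d, (mem_filter.1 hi₀S).2] using congrFun h i₀)
  have hdsum : ∑ i, d i = 0 := by
    have := congrArg ℓ hdv
    rw [map_sum, map_zero] at this
    rw [← this]
    refine sum_congr rfl fun i _ => ?_
    by_cases hi : d i = 0
    · simp [hi]
    · rw [map_smul, hv i (hdw i hi), smul_eq_mul, mul_one]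
  rcases le_total (∑ i, d i * φ i) 0 with hφ | hφ
  · exact ⟨d, hdw, hdv, hφ, exists_neg_of_sum_eq_zero hd0 hdsum⟩
  · refine ⟨-d, fun i hi => hdw i (by simpa using hi), by simp [hdv], by simpa using hφ,
      exists_neg_of_sum_eq_zero (neg_ne_zero.2 hd0) (by simp [hdsum])⟩

/-- Moving from `w` along `d` until the first coordinate hits zero. -/
lemma exists_reweighting_of_descent {v : ι → V} {φ w : ι → ℝ} (hw : ∀ i, 0 ≤ w i)
    {d : ι → ℝ} (hdw : ∀ i, d i ≠ 0 → w i ≠ 0) (hdv : ∑ i, d i • v i = 0)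
    (hdφ : ∑ i, d i * φ i ≤ 0) (hneg : ∃ i, d i < 0) :
    ∃ w' : ι → ℝ, (∀ i, 0 ≤ w' i) ∧ (∀ i, w' i ≠ 0 → w i ≠ 0) ∧
      #{i | w' i ≠ 0} < #{i | w i ≠ 0} ∧
      ∑ i, w' i • v i = ∑ i, w i • v i ∧ ∑ i, w' i * φ i ≤ ∑ i, w i * φ i := by
  classical
  obtain ⟨i₀, hi₀, hmin⟩ := (univ.filter (d · < 0)).exists_min_image (fun i => w i / -d i)
    (by simpa [Finset.Nonempty] using hneg)
  have hd₀ : d i₀ < 0 := (mem_filter.1 hi₀).2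
  set t := w i₀ / -d i₀
  have ht : 0 ≤ t := div_nonneg (hw i₀) (by linarith)
  have htd₀ : w i₀ + t * d i₀ = 0 := by
    have h : t * -d i₀ = w i₀ := div_mul_cancel₀ _ (neg_ne_zero.2 hd₀.ne)
    linarith [show t * d i₀ = -(t * -d i₀) by ring]
  have hsupp : ∀ i, w i + t * d i ≠ 0 → w i ≠ 0 := fun i hi h => hi (by
    rw [h, zero_add, (not_imp_comm.1 (hdw i)) (not_not.2 h), mul_zero])
  refine ⟨fun i => w i + t * d i, fun i => ?_, hsupp, card_lt_card ?_, ?_, ?_⟩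
  · rcases lt_or_ge (d i) 0 with h | h
    · have := hmin i (mem_filter.2 ⟨mem_univ _, h⟩)
      rw [le_div_iff₀ (neg_pos.2 h)] at this
      linarith
    · exact add_nonneg (hw i) (mul_nonneg ht h)
  · refine (ssubset_iff_of_subset fun i hi => ?_).2 ⟨i₀, ?_, ?_⟩
    · simpa using hsupp i (mem_filter.1 hi).2
    · simpa using hdw i₀ hd₀.ne
    · simpa using htd₀
  · simp [add_smul, sum_add_distrib, mul_smul, ← smul_sum, hdv]
  · simp only [add_mul, sum_add_distrib, mul_assoc, ← mul_sum]
    nlinarith [mul_nonpos_of_nonneg_of_nonpos ht hdφ]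

/-- Carathéodory-type support reduction for a linear program. -/
theorem exists_sparse_reweighting [FiniteDimensional ℝ V] (ℓ : V →ₗ[ℝ] ℝ) (v : ι → V)
    (φ : ι → ℝ) (w : ι → ℝ) (hw : ∀ i, 0 ≤ w i) (hv : ∀ i, w i ≠ 0 → ℓ (v i) = 1) :
    ∃ q : ι → ℝ, (∀ i, 0 ≤ q i) ∧ (∀ i, q i ≠ 0 → w i ≠ 0) ∧
      #{i | q i ≠ 0} ≤ Module.finrank ℝ V ∧
      ∑ i, q i • v i = ∑ i, w i • v i ∧ ∑ i, q i * φ i ≤ ∑ i, w i * φ i := by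
  induction hn : #{i | w i ≠ 0} using Nat.strong_induction_on generalizing w with
  | _ n ih =>
    by_cases hcard : #{i | w i ≠ 0} ≤ Module.finrank ℝ V
    · exact ⟨w, hw, fun _ h => h, hcard, rfl, le_rfl⟩
    obtain ⟨d, hdw, hdv, hdφ, hneg⟩ := exists_descent_direction ℓ φ hv (not_le.1 hcard)
    obtain ⟨w', hw', hw'w, hlt, hv', hφ'⟩ := exists_reweighting_of_descent hw hdw hdv hdφ hneg
    obtain ⟨q, hq, hqw', hqcard, hqv, hqφ⟩ :=
      ih _ (hn ▸ hlt) w' hw' (fun i hi => hv i (hw'w i hi)) rfl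
    exact ⟨q, hq, fun i hi => hw'w i (hqw' i hi), hqcard, hqv.trans hv', hqφ.trans hφ'⟩

lemma exists_fin_reindex {β : Type*} [Nonempty β] (q : ι → ℝ) (c : ι → β) {N : ℕ}
    (hN : #{i | q i ≠ 0} ≤ N) :
    ∃ (q' : Fin N → ℝ) (c' : Fin N → β), (∀ j, q' j ≠ 0 → ∃ i, q' j = q i ∧ c' j = c i) ∧
      ∀ F : β → ℝ, ∑ j, q' j * F (c' j) = ∑ i, q i * F (c i) := by
  classical
  set S := univ.filter (q · ≠ 0)
  let e : S → Fin N := fun s => Fin.castLE hN (S.equivFin s)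
  have he : Function.Injective e := fun a b h => S.equivFin.injective (Fin.castLE_injective hN h)
  refine ⟨Function.extend e (fun s => q s) 0,
    Function.extend e (fun s => c s) fun _ => Classical.arbitrary β, fun j hj => ?_, fun F => ?_⟩
  · by_cases hj' : ∃ s, e s = j
    · obtain ⟨s, rfl⟩ := hj'
      exact ⟨s, he.extend_apply _ _ _, he.extend_apply _ _ _⟩
    · exact absurd (Function.extend_apply' _ _ _ hj') hj
  · refine (Fintype.sum_of_injective e he (fun s => q s * F (c s)) _ (fun j hj => ?_)
      fun s => by simp only [he.extend_apply]).symm.trans ?_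
    · rw [Function.extend_apply' _ _ _ (by simpa using hj), Pi.zero_apply, zero_mul]
    · rw [sum_coe_sort S fun i => q i * F (c i)]
      exact sum_filter_of_ne fun i _ h => left_ne_zero_of_mul h

end SparseReweighting

section SupportReduction

variable {X Y U : Type*} [Fintype X] [Fintype Y] [Fintype U] {π : X × Y → ℝ}
  {P : X × Y × U → ℝ}

/-- The conditional distribution `P_{XY|U=u}` (identically `0` when `P_U(u) = 0`). -/
def condXY (P : X × Y × U → ℝ) (u : U) (p : X × Y) : ℝ := P (p.1, p.2, u) / margU P u

lemma mixture_margU_condXY (hP : ∀ z, 0 ≤ P z) : mixture (margU P) (condXY P) = P :=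
  funext fun ⟨x, y, u⟩ => by
    rcases eq_or_ne (margU P u) 0 with h | h
    · simp only [mixture, h, zero_mul]
      exact (le_antisymm (h ▸ le_margU hP x y u) (hP _)).symm
    · exact mul_div_cancel₀ _ h

lemma isPMF_condXY (hP : ∀ z, 0 ≤ P z) {u : U} (hu : margU P u ≠ 0) : IsPMF (condXY P u) :=
  ⟨fun _ => div_nonneg (hP _) (margU_nonneg hP u), by
    change ∑ p : X × Y, P (p.1, p.2, u) / margU P u = 1
    rw [← sum_div]; exact div_self hu⟩

lemma isIndep_condXY (hP : IsMarkovXWY P) {u : U} (hu : margU P u ≠ 0) :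
    IsIndep (condXY P u) := fun x y => by
  simp only [condXY, ← sum_div]
  have h : P (x, y, u) * margU P u = (∑ i, P (x, i, u)) * ∑ i, P (i, y, u) := hP x y u
  rw [div_mul_div_comm, ← h, mul_div_mul_right _ _ hu]

lemma sum_margU_mul_condXY (hP : IsWynerCoupling π P) (p : X × Y) :
    ∑ u, margU P u * condXY P u p = π p :=
  (sum_congr rfl fun u _ => congrFun (mixture_margU_condXY hP.1.1) (p.1, p.2, u)).trans
    (hP.2.1 p.1 p.2)

lemma mutualInfoW_eq_sum_klDiv_condXY (hP : IsWynerCoupling π P) :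
    mutualInfoW P = ∑ u, margU P u * klDiv (condXY P u) π := by
  conv_lhs => rw [← mixture_margU_condXY hP.1.1]
  exact mutualInfoW_mixture (margU_nonneg hP.1.1) (fun u hu => isPMF_condXY hP.1.1 hu)
    (sum_margU_mul_condXY hP)

lemma exists_fin_isWynerCoupling_mutualInfoW_le (hπ : IsPMF π) (hP : IsWynerCoupling π P) :
    ∃ P' : X × Y × Fin (Fintype.card X * Fintype.card Y) → ℝ,
      IsWynerCoupling π P' ∧ mutualInfoW P' ≤ mutualInfoW P := by
  have hc : ∀ u, margU P u ≠ 0 → IsPMF (condXY P u) ∧ IsIndep (condXY P u) :=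
    fun u hu => ⟨isPMF_condXY hP.1.1 hu, isIndep_condXY hP.2.2 hu⟩
  let ℓ : (X × Y → ℝ) →ₗ[ℝ] ℝ := ∑ p, LinearMap.proj p
  obtain ⟨q, hq0, hqw, hqcard, hqv, hqφ⟩ := exists_sparse_reweighting ℓ (condXY P)
    (fun u => klDiv (condXY P u) π) (margU P) (margU_nonneg hP.1.1)
    fun u hu => by simpa [ℓ] using (hc u hu).1.2
  rw [Module.finrank_fintype_fun_eq_card, Fintype.card_prod] at hqcard
  obtain ⟨q', c', hq'c', hsum⟩ := exists_fin_reindex q (condXY P) hqcard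
  have hc' : ∀ j, q' j ≠ 0 → IsPMF (c' j) ∧ IsIndep (c' j) := fun j hj => by
    obtain ⟨u, hqu, hcu⟩ := hq'c' j hj
    exact hcu ▸ hc u (hqw u (hqu ▸ hj))
  have hq'0 : ∀ j, 0 ≤ q' j := fun j => by
    by_cases hj : q' j = 0
    · exact hj.ge
    · obtain ⟨u, hqu, -⟩ := hq'c' j hj
      exact hqu ▸ hq0 u
  have hm' : ∀ p, ∑ j, q' j * c' j p = π p := fun p => by
    rw [hsum (· p), ← sum_margU_mul_condXY hP p]
    simpa using congrFun hqv p
  refine ⟨mixture q' c', isWynerCoupling_mixture hπ hq'0 hc' hm', ?_⟩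
  rw [mutualInfoW_mixture hq'0 (fun j hj => (hc' j hj).1) hm', hsum (klDiv · π),
    mutualInfoW_eq_sum_klDiv_condXY hP]
  exact hqφ

lemma CWyner_le_CWynerAll {π : X × Y → ℝ} (hπ : IsPMF π) : CWyner π ≤ CWynerAll π :=
  le_CWynerAll hπ fun _ _ hP =>
    let ⟨_, hP', hle⟩ := exists_fin_isWynerCoupling_mutualInfoW_le hπ hP
    (CWyner_le_mutualInfoW hP').trans hle

end SupportReduction

/-- The variational quantities coincide with Wyner's common information:
`R_sh = R* = C_Wyner(X;Y)` (the latter over arbitrary finite auxiliary alphabets). -/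
theorem Rsh_eq_Rstar_eq_CWyner
    {X Y : Type*} [Fintype X] [Fintype Y] (π : X × Y → ℝ) (hπ : IsPMF π) :
    Rsh π = CWyner π ∧ CWyner π = CWynerAll π :=
  ⟨(Rsh_le_CWyner hπ).antisymm (CWyner_le_Rsh hπ),
    (CWyner_le_CWynerAll hπ).antisymm (CWynerAll_le_CWyner hπ)⟩
end
end

section
/- Small-θ limit of the minimized negative cumulant generating function: for every α ∈ (0,1], lim_{θ ↓ 0} (1/θ) Ω^{(α,θ)} = R^{(α)}; equivalently, (1/θ) Ω^{(α,θ)} = R^{(α)} + ε^{(α,θ)} with ε^{(α,θ)} → 0 as θ ↓ 0. -/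
open Filter

noncomputable section

/-! Jensen's inequality gives `Ω^{(α,θ)}(Q) ≤ θ R^{(α)}(Q)` for every `Q`. Conversely,
`e^{-t} ≤ 1 - t + t² e^{|t|}` and `-log S ≥ 1 - S` give
`Ω^{(α,θ)}(Q) ≥ θ R^{(α)}(Q) - θ² E_Q[ω² e^{θ|ω|}]`, and the remainder is bounded uniformly
over `𝒬`: on `supp Q` every marginal lies in `[Q(z), 1]`, so `|ω(z)| ≤ M - 3 log Q(z)` with `M`
bounding `|log π|` on `supp π`, and then `Q(z) ω(z)² e^{θ|ω(z)|} ≤ 144 e^{M/3}` once `θ ≤ 1/6`.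
Taking infima over `𝒬` squeezes `(1/θ) Ω^{(α,θ)}` between `R^{(α)} - θ C` and `R^{(α)}`. -/

open Finset
open Real (exp log)

section Real

open Real

lemma Real.exp_le_one_add_add_sq_mul_exp_abs (x : ℝ) : exp x ≤ 1 + x + x ^ 2 * exp |x| := by
  have hx : exp x - 1 ≤ x * exp x := by
    have h := mul_le_mul_of_nonneg_right (add_one_le_exp (-x)) (exp_pos x).le
    rw [← exp_add, neg_add_cancel, exp_zero] at h
    linarith
  rcases le_total 0 x with h0 | h0
  · rw [abs_of_nonneg h0]
    nlinarith [mul_le_mul_of_nonneg_left hx h0]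
  · nlinarith [mul_le_mul_of_nonpos_left (add_one_le_exp x) h0, one_le_exp (abs_nonneg x),
      sq_nonneg x]

lemma mul_sq_mul_exp_le {q w M θ : ℝ} (hq : 0 < q) (hw : |w| ≤ M - 3 * log q)
    (hθ0 : 0 ≤ θ) (hθ : θ ≤ 1 / 6) : q * (w ^ 2 * exp (θ * |w|)) ≤ 144 * exp (M / 3) := by
  set v := M - 3 * log q
  have hv : 0 ≤ v := (abs_nonneg w).trans hw
  have hq_eq : q = exp (M / 3) * exp (-(v / 3)) := by
    rw [← exp_add, show M / 3 + -(v / 3) = log q by ring, exp_log hq]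
  have hw2 : w ^ 2 ≤ v ^ 2 := by simpa only [sq_abs] using pow_le_pow_left₀ (abs_nonneg w) hw 2
  have hexp : exp (θ * |w|) ≤ exp (v / 6) := exp_le_exp.2 (by nlinarith [abs_nonneg w])
  have hv2 : v ^ 2 ≤ 144 * (exp (v / 12) * exp (v / 12)) := by
    have := add_one_le_exp (v / 12)
    nlinarith
  calc q * (w ^ 2 * exp (θ * |w|)) ≤ q * (v ^ 2 * exp (v / 6)) := by gcongr
    _ ≤ q * (144 * (exp (v / 12) * exp (v / 12)) * exp (v / 6)) := by gcongr
    _ = 144 * exp (M / 3) * exp (-(v / 3) + (v / 12 + v / 12) + v / 6) := by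
      rw [hq_eq, exp_add, exp_add, exp_add]; ring
    _ = 144 * exp (M / 3) := by ring_nf; rw [exp_zero, mul_one]

end Real

section WeightedSum

open Real

variable {ι : Type*} {t : Finset ι} {w x : ι → ℝ}

lemma exp_sum_mul_le_sum_mul_exp (hw0 : ∀ i ∈ t, 0 ≤ w i) (hw1 : ∑ i ∈ t, w i = 1) :
    exp (∑ i ∈ t, w i * x i) ≤ ∑ i ∈ t, w i * exp (x i) := by
  simpa only [smul_eq_mul] using convexOn_exp.map_sum_le hw0 hw1 fun i _ => Set.mem_univ (x i)

lemma neg_log_sum_mul_exp_neg_le (hw0 : ∀ i ∈ t, 0 ≤ w i) (hw1 : ∑ i ∈ t, w i = 1) (θ : ℝ) :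
    -log (∑ i ∈ t, w i * exp (-(θ * x i))) ≤ θ * ∑ i ∈ t, w i * x i := by
  have h := exp_sum_mul_le_sum_mul_exp (x := fun i => -(θ * x i)) hw0 hw1
  rw [neg_le, le_log_iff_exp_le ((exp_pos _).trans_le h), mul_sum, ← sum_neg_distrib]
  convert h using 3 with i
  ring

lemma mul_sum_sub_le_neg_log_sum_mul_exp_neg (hw0 : ∀ i ∈ t, 0 ≤ w i)
    (hw1 : ∑ i ∈ t, w i = 1) {θ : ℝ} (hθ : 0 ≤ θ) :
    θ * ∑ i ∈ t, w i * x i - θ ^ 2 * ∑ i ∈ t, w i * (x i ^ 2 * exp (θ * |x i|)) ≤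
      -log (∑ i ∈ t, w i * exp (-(θ * x i))) := by
  have hS : ∑ i ∈ t, w i * exp (-(θ * x i)) ≤
      ∑ i ∈ t, (w i - θ * (w i * x i) + θ ^ 2 * (w i * (x i ^ 2 * exp (θ * |x i|)))) := by
    refine sum_le_sum fun i hi => ?_
    have h := exp_le_one_add_add_sq_mul_exp_abs (-(θ * x i))
    rw [abs_neg, abs_mul, abs_of_nonneg hθ] at h
    nlinarith [mul_le_mul_of_nonneg_left h (hw0 i hi)]
  rw [sum_add_distrib, sum_sub_distrib, ← mul_sum, ← mul_sum, hw1] at hS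
  have hpos := (exp_pos _).trans_le (exp_sum_mul_le_sum_mul_exp (x := fun i => -(θ * x i)) hw0 hw1)
  linarith [log_le_sub_one_of_pos hpos]

end WeightedSum

section PMF

variable {β γ : Type*} [Fintype β] [Fintype γ] {P : β → ℝ}

lemma IsPMF.sum_filter_pos (hP : IsPMF P) : ∑ a ∈ univ.filter (fun a => 0 < P a), P a = 1 := by
  rw [sum_filter_of_ne fun a _ h => (hP.1 a).lt_of_ne (Ne.symm h)]
  exact hP.2

lemma sum_filter_pos_mul (hP : ∀ a, 0 ≤ P a) (g : β → ℝ) :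
    ∑ a ∈ univ.filter (fun a => 0 < P a), P a * g a = ∑ a, P a * g a :=
  sum_filter_of_ne fun a _ h => (hP a).lt_of_ne fun h' => h (by rw [← h', zero_mul])

lemma IsPMF.le_sum_comp_le_one (hP : IsPMF P) {e : γ → β} (he : Function.Injective e) (c : γ) :
    P (e c) ≤ ∑ c', P (e c') ∧ ∑ c', P (e c') ≤ 1 := by
  refine ⟨single_le_sum (fun c' _ => hP.1 (e c')) (mem_univ c), ?_⟩
  classical
  rw [← sum_image fun _ _ _ _ h => he h, ← hP.2]
  exact sum_le_sum_of_subset_of_nonneg (subset_univ _) fun a _ _ => hP.1 a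

end PMF

section Omega

variable {X Y U : Type*} [Fintype X] [Fintype Y] [Fintype U] {π : X × Y → ℝ} {α : ℝ}
  {Q : X × Y × U → ℝ}

lemma sum_mul_log_margXY_div_eq_klDiv (hQ : ∀ z, 0 ≤ Q z) :
    ∑ z ∈ univ.filter (fun z => 0 < Q z), Q z * log (margXY Q z.1 z.2.1 / π (z.1, z.2.1)) =
      klDiv (fun p : X × Y => margXY Q p.1 p.2) π := by
  have hm : ∀ p : X × Y, 0 ≤ margXY Q p.1 p.2 := fun p => sum_nonneg fun u _ => hQ _
  rw [sum_filter_pos_mul hQ fun z => log (margXY Q z.1 z.2.1 / π (z.1, z.2.1)), klDiv,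
    sum_filter_pos_mul hm fun p => log (margXY Q p.1 p.2 / π p)]
  simp only [Fintype.sum_prod_type, ← sum_mul]
  rfl

lemma sum_mul_omegaFn_eq_Ralpha (hQ : ∀ z, 0 ≤ Q z) :
    ∑ z ∈ univ.filter (fun z => 0 < Q z), Q z * omegaFn π α Q z = Ralpha π α Q := by
  simp only [omegaFn, mul_add, mul_left_comm (Q _), sum_add_distrib, ← mul_sum,
    sum_mul_log_margXY_div_eq_klDiv hQ, Ralpha, condKLind, condKLpi]

lemma abs_omegaFn_le (hα0 : 0 ≤ α) (hα1 : α ≤ 1) (hQ : IsPMF Q)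
    (hsupp : ∀ x y, 0 < margXY Q x y → 0 < π (x, y)) {M : ℝ}
    (hM : ∀ p, 0 < π p → |log (π p)| ≤ M) {z : X × Y × U} (hz : 0 < Q z) :
    |omegaFn π α Q z| ≤ M - 3 * log (Q z) := by
  obtain ⟨x, y, u⟩ := z
  have hlog : ∀ m, Q (x, y, u) ≤ m ∧ m ≤ 1 →
      0 < m ∧ log (Q (x, y, u)) ≤ log m ∧ log m ≤ 0 := fun m ⟨h1, h2⟩ =>
    ⟨hz.trans_le h1, Real.log_le_log hz h1, Real.log_nonpos (hz.le.trans h1) h2⟩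
  obtain ⟨hXY, hXY₁, hXY₂⟩ := hlog (margXY Q x y)
    (hQ.le_sum_comp_le_one (e := fun u' => (x, y, u')) (fun _ _ h => by simpa using h) u)
  obtain ⟨hU, hU₁, hU₂⟩ := hlog (margU Q u)
    (hQ.le_sum_comp_le_one (e := fun p : X × Y => (p.1, p.2, u))
      (fun _ _ h => by simpa [Prod.ext_iff] using h) (x, y))
  obtain ⟨hXU, hXU₁, hXU₂⟩ := hlog (margXU Q x u)
    (hQ.le_sum_comp_le_one (e := fun y' => (x, y', u)) (fun _ _ h => by simpa using h) y)
  obtain ⟨hYU, hYU₁, hYU₂⟩ := hlog (margYU Q y u)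
    (hQ.le_sum_comp_le_one (e := fun x' => (x', y, u)) (fun _ _ h => by simpa using h) x)
  have hπ := hsupp x y hXY
  have hπM := abs_le.mp (hM _ hπ)
  simp only [omegaFn]
  rw [Real.log_div hXY.ne' hπ.ne', Real.log_div (mul_pos hz hU).ne' (mul_pos hXU hYU).ne',
    Real.log_mul hz.ne' hU.ne', Real.log_mul hXU.ne' hYU.ne',
    Real.log_div hz.ne' (mul_pos hU hπ).ne', Real.log_mul hU.ne' hπ.ne', abs_le]
  constructor <;> nlinarith

lemma OmegaQ_le_mul_Ralpha (hQ : IsPMF Q) (θ : ℝ) : OmegaQ π α θ Q ≤ θ * Ralpha π α Q := by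
  rw [← sum_mul_omegaFn_eq_Ralpha hQ.1]
  exact neg_log_sum_mul_exp_neg_le (fun z hz => (mem_filter.mp hz).2.le) hQ.sum_filter_pos θ

lemma mul_Ralpha_sub_le_OmegaQ (hα0 : 0 ≤ α) (hα1 : α ≤ 1) (hQ : IsPMF Q)
    (hsupp : ∀ x y, 0 < margXY Q x y → 0 < π (x, y)) {M : ℝ}
    (hM : ∀ p, 0 < π p → |log (π p)| ≤ M) {θ : ℝ} (hθ0 : 0 ≤ θ) (hθ : θ ≤ 1 / 6) :
    θ * Ralpha π α Q - θ ^ 2 * (Fintype.card (X × Y × U) * (144 * exp (M / 3))) ≤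
      OmegaQ π α θ Q := by
  have hrem : ∑ z ∈ univ.filter (fun z => 0 < Q z),
      Q z * (omegaFn π α Q z ^ 2 * exp (θ * |omegaFn π α Q z|)) ≤
        Fintype.card (X × Y × U) * (144 * exp (M / 3)) := by
    refine (sum_le_card_nsmul _ _ _ fun z hz => mul_sq_mul_exp_le (mem_filter.mp hz).2
      (abs_omegaFn_le hα0 hα1 hQ hsupp hM (mem_filter.mp hz).2) hθ0 hθ).trans ?_
    rw [nsmul_eq_mul]
    gcongr
    exact_mod_cast card_filter_le _ _
  rw [← sum_mul_omegaFn_eq_Ralpha hQ.1]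
  refine le_trans ?_ (mul_sum_sub_le_neg_log_sum_mul_exp_neg
    (fun z hz => (mem_filter.mp hz).2.le) hQ.sum_filter_pos hθ0)
  gcongr

lemma neg_le_Ralpha (hα0 : 0 ≤ α) (hα1 : α ≤ 1) (hQ : IsPMF Q)
    (hsupp : ∀ x y, 0 < margXY Q x y → 0 < π (x, y)) {M : ℝ}
    (hM : ∀ p, 0 < π p → |log (π p)| ≤ M) :
    -(M + 3 * Fintype.card (X × Y × U)) ≤ Ralpha π α Q := by
  have hterm : ∀ z ∈ univ.filter (fun z => 0 < Q z),
      3 * (Q z - 1) - M * Q z ≤ Q z * omegaFn π α Q z := by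
    intro z hz
    have hq := (mem_filter.mp hz).2
    have hω := abs_le.mp (abs_omegaFn_le hα0 hα1 hQ hsupp hM hq)
    nlinarith [Real.self_sub_one_le_mul_log hq.le]
  have hcard : ((univ.filter (fun z => 0 < Q z)).card : ℝ) ≤ Fintype.card (X × Y × U) := by
    exact_mod_cast card_filter_le _ _
  have hsum := sum_le_sum hterm
  rw [sum_mul_omegaFn_eq_Ralpha hQ.1, sum_sub_distrib, ← mul_sum, ← mul_sum, sum_sub_distrib,
    hQ.sum_filter_pos, sum_const, nsmul_eq_mul, mul_one] at hsum
  linarith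

end Omega

lemma tendsto_one_div_mul_sInf_image {ι : Type*} {s : Set ι} {f : ℝ → ι → ℝ} {g : ι → ℝ}
    {C θ₀ : ℝ} (hθ₀ : 0 < θ₀) (hg : BddBelow (g '' s))
    (hle : ∀ θ ∈ Set.Ioc 0 θ₀, ∀ i ∈ s, f θ i ≤ θ * g i)
    (hge : ∀ θ ∈ Set.Ioc 0 θ₀, ∀ i ∈ s, θ * g i - θ ^ 2 * C ≤ f θ i) :
    Tendsto (fun θ => 1 / θ * sInf (f θ '' s)) (nhdsWithin 0 (Set.Ioi 0))
      (nhds (sInf (g '' s))) := by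
  rcases s.eq_empty_or_nonempty with rfl | hs
  · simp -- both infima are `sInf ∅ = 0`
  obtain ⟨m, hm⟩ := hg
  have hbounds : ∀ θ ∈ Set.Ioc 0 θ₀, sInf (g '' s) - θ * C ≤ 1 / θ * sInf (f θ '' s) ∧
      1 / θ * sInf (f θ '' s) ≤ sInf (g '' s) := by
    intro θ hθ
    have hg_le : ∀ i ∈ s, sInf (g '' s) ≤ g i := fun i hi => csInf_le ⟨m, hm⟩ ⟨i, hi, rfl⟩
    have hbdd : BddBelow (f θ '' s) := by
      refine ⟨θ * m - θ ^ 2 * C, ?_⟩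
      rintro _ ⟨i, hi, rfl⟩
      nlinarith [hge θ hθ i hi, hm ⟨i, hi, rfl⟩, hθ.1]
    have hlower : θ * sInf (g '' s) - θ ^ 2 * C ≤ sInf (f θ '' s) := by
      refine le_csInf (hs.image _) ?_
      rintro _ ⟨i, hi, rfl⟩
      nlinarith [hge θ hθ i hi, hg_le i hi, hθ.1]
    have hupper : sInf (f θ '' s) / θ ≤ sInf (g '' s) := by
      refine le_csInf (hs.image _) ?_
      rintro _ ⟨i, hi, rfl⟩
      rw [div_le_iff₀' hθ.1]
      exact (csInf_le hbdd ⟨i, hi, rfl⟩).trans (hle θ hθ i hi)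
    rw [one_div_mul_eq_div, le_div_iff₀' hθ.1]
    exact ⟨by linarith, hupper⟩
  have hlim : Tendsto (fun θ => sInf (g '' s) - θ * C) (nhdsWithin 0 (Set.Ioi 0))
      (nhds (sInf (g '' s))) := by
    have h : Continuous fun θ : ℝ => sInf (g '' s) - θ * C := by fun_prop
    simpa using (h.tendsto 0).mono_left nhdsWithin_le_nhds
  have hev : ∀ᶠ θ in nhdsWithin 0 (Set.Ioi 0), θ ∈ Set.Ioc 0 θ₀ := Ioc_mem_nhdsGT hθ₀
  exact tendsto_of_tendsto_of_tendsto_of_le_of_le' hlim tendsto_const_nhds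
    (hev.mono fun θ hθ => (hbounds θ hθ).1) (hev.mono fun θ hθ => (hbounds θ hθ).2)

theorem Omega_small_theta_limit_general
    {X Y : Type*} [Fintype X] [Fintype Y] (π : X × Y → ℝ)
    (α : ℝ) (hα : α ∈ Set.Ioc (0 : ℝ) 1) :
    Filter.Tendsto (fun θ : ℝ => (1 / θ) * OmegaMin π α θ)
      (nhdsWithin 0 (Set.Ioi 0)) (nhds (RalphaMin π α)) := by
  have himage : ∀ F : (X × Y × Fin (Fintype.card X * Fintype.card Y) → ℝ) → ℝ,
      {r | ∃ Q ∈ QClass π, r = F Q} = F '' QClass π := fun F => by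
    ext r
    simp [eq_comm]
  set M := ∑ p, |log (π p)|
  have hM : ∀ p, 0 < π p → |log (π p)| ≤ M := fun p _ =>
    single_le_sum (fun q _ => abs_nonneg (log (π q))) (mem_univ p)
  simp only [OmegaMin, RalphaMin, himage]
  refine tendsto_one_div_mul_sInf_image (θ₀ := 1 / 6) (by norm_num) ?_
    (fun θ _ Q hQ => OmegaQ_le_mul_Ralpha hQ.1 θ)
    (fun θ hθ Q hQ => mul_Ralpha_sub_le_OmegaQ hα.1.le hα.2 hQ.1 hQ.2 hM hθ.1.le hθ.2)
  exact ⟨_, by rintro _ ⟨Q, hQ, rfl⟩; exact neg_le_Ralpha hα.1.le hα.2 hQ.1 hQ.2 hM⟩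

/-- Small-`θ` limit of the minimized negative cumulant generating function: for every
`α ∈ (0,1]`, `(1/θ) Ω^{(α,θ)} → R^{(α)}` as `θ ↓ 0`. -/
theorem Omega_small_theta_limit
    {X Y : Type*} [Fintype X] [Fintype Y] (π : X × Y → ℝ) (hπ : IsPMF π)
    (α : ℝ) (hα : α ∈ Set.Ioc (0 : ℝ) 1) :
    Filter.Tendsto (fun θ : ℝ => (1 / θ) * OmegaMin π α θ)
      (nhdsWithin 0 (Set.Ioi 0)) (nhds (RalphaMin π α)) :=
  Omega_small_theta_limit_general π α hα
end
end
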